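/- Fix ℓ ∈ ℤ. For every binary word w, write V(w) = ((p,p'),(q,q'),(r,r')) for the vertex of the parabolic fixed point tree PT(ℓ) at w. Then p > 0, q > 0, r > 0, and gcd(p, |p'|) = 1, gcd(q, |q'|) = 1, gcd(r, |r'|) = 1. -/
import Mathlib


/-- One generation step of the parabolic fixed point tree `PT(ℓ)`. -/
def ptStep (t : (ℤ × ℤ) × (ℤ × ℤ) × (ℤ × ℤ)) (d : Bool) : (ℤ × ℤ) × (ℤ × ℤ) × (ℤ × ℤ) :=
  match t, d with
  | ((p, p'), (q, q'), (r, r')), false =>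
      ((p, p'), (q ^ 2 * r' - q * q' * r - r, -(q' ^ 2) * r + q * q' * r' - r'), (q, q'))
  | ((p, p'), (q, q'), (r, r')), true =>
      ((q, q'), (-(q ^ 2) * p' + q * q' * p - p, q' ^ 2 * p - q * q' * p' - p'), (r, r'))

/-- The parabolic fixed point tree `PT(ℓ)`, encoded on binary words. -/
def PTtree (l : ℤ) (w : List Bool) : (ℤ × ℤ) × (ℤ × ℤ) × (ℤ × ℤ) :=
  w.foldl ptStep ((1, -l - 1), (2, -2 * l + 1), (1, -l + 2))

/-- Invariant preserved by `ptStep`. -/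
def PTInv (t : (ℤ × ℤ) × (ℤ × ℤ) × (ℤ × ℤ)) : Prop :=
  0 < t.1.1 ∧ 0 < t.2.2.1 ∧ t.1.1 < t.2.1.1 ∧ t.2.2.1 < t.2.1.1 ∧
  IsCoprime t.1.1 t.1.2 ∧ IsCoprime t.2.1.1 t.2.1.2 ∧ IsCoprime t.2.2.1 t.2.2.2 ∧
  3 ≤ t.1.1 * t.2.1.2 - t.2.1.1 * t.1.2 ∧
  3 ≤ t.2.1.1 * t.2.2.2 - t.2.2.1 * t.2.1.2 ∧
  3 ≤ t.1.1 * t.2.2.2 - t.2.2.1 * t.1.2 ∧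
  t.1.1 * t.2.2.2 - t.2.2.1 * t.1.2 ≤
    (t.1.1 * t.2.1.2 - t.2.1.1 * t.1.2) + (t.2.1.1 * t.2.2.2 - t.2.2.1 * t.2.1.2)

lemma ptInv_step (t : (ℤ × ℤ) × (ℤ × ℤ) × (ℤ × ℤ)) (d : Bool) (h : PTInv t) :
    PTInv (ptStep t d) := by
  obtain ⟨⟨p, p'⟩, ⟨q, q'⟩, ⟨r, r'⟩⟩ := t
  obtain ⟨hp, hr, hpq, hrq, gp, gq, gr, ha, hb, hc, habc⟩ := h
  cases d
  · simp only [PTInv, ptStep]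
    refine ⟨hp, by linarith, by nlinarith, by nlinarith, gp, ?_, gq, ?_, ?_, ?_, ?_⟩
    · obtain ⟨u, v, huv⟩ := gr
      exact ⟨u * (q * q' - 1) + v * q' ^ 2, -(u * q ^ 2) - v * (q * q' + 1),
        by linear_combination huv⟩
    · nlinarith
    · nlinarith
    · nlinarith
    · nlinarith
  · simp only [PTInv, ptStep]
    refine ⟨by linarith, hr, by nlinarith, by nlinarith, gq, ?_, gr, ?_, ?_, ?_, ?_⟩
    · obtain ⟨u, v, huv⟩ := gp
      exact ⟨-(u * (q * q' + 1)) - v * q' ^ 2, u * q ^ 2 + v * (q * q' - 1),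
        by linear_combination huv⟩
    · nlinarith
    · nlinarith
    · nlinarith
    · nlinarith

lemma ptInv_foldl (w : List Bool) (t : (ℤ × ℤ) × (ℤ × ℤ) × (ℤ × ℤ)) (h : PTInv t) :
    PTInv (w.foldl ptStep t) := by
  induction w generalizing t with
  | nil => exact h
  | cons d w ih => exact ih _ (ptInv_step t d h)

theorem stmt15 (l : ℤ) (w : List Bool) :
    0 < (PTtree l w).1.1 ∧ 0 < (PTtree l w).2.1.1 ∧ 0 < (PTtree l w).2.2.1 ∧
    Int.gcd (PTtree l w).1.1 (PTtree l w).1.2 = 1 ∧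
    Int.gcd (PTtree l w).2.1.1 (PTtree l w).2.1.2 = 1 ∧
    Int.gcd (PTtree l w).2.2.1 (PTtree l w).2.2.2 = 1 := by
  have h : PTInv (PTtree l w) := by
    apply ptInv_foldl
    refine ⟨one_pos, one_pos, one_lt_two, one_lt_two, isCoprime_one_left, ?_,
      isCoprime_one_left, by ring_nf; omega, by ring_nf; omega, by ring_nf; omega,
      by ring_nf; omega⟩
    exact ⟨l, 1, by ring⟩
  obtain ⟨hp, hr, hpq, hrq, gp, gq, gr, _⟩ := h
  exact ⟨hp, by linarith, hr, Int.isCoprime_iff_gcd_eq_one.mp gp,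
    Int.isCoprime_iff_gcd_eq_one.mp gq, Int.isCoprime_iff_gcd_eq_one.mp gr⟩
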